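/- arXiv:2504.12524 — 3 statements merged into one kernel-verified Lean document; each statement's English description precedes it below -/
import Mathlib

section
/- For every real number m ∈ (0,1) and every integer k ≥ 2, the generalized binomial coefficient satisfies the strict bound |binom(m,k)| < Γ(m+1)·|sin(π(k−m−1))| / (π·(k−m−1)^{m+1}), where Γ denotes the Gamma function. -/
/-! For `0 < m < 1`, `|binom(m, k)| = m Γ(k - m) / (Γ(1 - m) k!)`, while
`|sin (π (k - m - 1))| = sin (π m)` and the reflection formula turn the right-hand side into
`m / (Γ(1 - m) x ^ (m + 1))` with `x = k - m - 1`. The bound is thus the Gautschi-type inequality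
`x ^ (m + 1) Γ(x + 1) < Γ(x + m + 2) = k!`, which follows from the log-convexity of `Γ`. -/

/-- Generalized binomial coefficient `binom(m,k) = m(m-1)⋯(m-(k-1))/k!`. -/
noncomputable def genBinom (m : ℝ) (k : ℕ) : ℝ :=
  (∏ i ∈ Finset.range k, (m - i)) / (Nat.factorial k)

open Real Finset Nat

namespace Real

theorem Gamma_add_nat_eq_prod_mul {s : ℝ} (hs : ∀ i : ℕ, s ≠ -i) (n : ℕ) :
    Gamma (s + n) = (∏ i ∈ range n, (s + i)) * Gamma s := by
  induction n with
  | zero => simp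
  | succ n ih =>
    have hsn : s + n ≠ 0 := fun h => hs n (by linarith)
    rw [Nat.cast_succ, ← add_assoc, Gamma_add_one hsn, ih, prod_range_succ]
    ring

/- By log-convexity of `Γ`, the secant of `log ∘ Γ` over `[y, y + s]` is steeper than the one over
`[y, y + 1]`, whose slope is `log y`. -/
theorem rpow_mul_Gamma_le_Gamma_add {y s : ℝ} (hy : 0 < y) (hs : 1 ≤ s) :
    y ^ s * Gamma y ≤ Gamma (y + s) := by
  have hGy := Gamma_pos_of_pos hy
  have hGys := Gamma_pos_of_pos (by linarith : 0 < y + s)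
  have hslope := convexOn_log_Gamma.secant_mono (a := y) (x := y + 1) (y := y + s)
    hy (Set.mem_Ioi.2 (by linarith)) (Set.mem_Ioi.2 (by linarith)) (lt_add_one y).ne'
    (by linarith : y < y + s).ne' (by linarith)
  simp only [Function.comp_apply, add_sub_cancel_left, div_one,
    Gamma_add_one hy.ne', log_mul hy.ne' hGy.ne', add_sub_cancel_right] at hslope
  have hlog : log (y ^ s * Gamma y) ≤ log (Gamma (y + s)) := by
    rw [log_mul (by positivity) hGy.ne', log_rpow hy]
    rw [le_div_iff₀ (by linarith)] at hslope
    linarith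
  exact (log_le_log_iff (by positivity) hGys).1 hlog

theorem rpow_mul_Gamma_add_one_lt_Gamma_add {x m : ℝ} (hx : 0 < x) (hm : 0 < m) :
    x ^ (m + 1) * Gamma (x + 1) < Gamma (x + m + 2) := by
  calc x ^ (m + 1) * Gamma (x + 1)
      < (x + 1) ^ (m + 1) * Gamma (x + 1) := by
        gcongr
        linarith
    _ ≤ Gamma (x + 1 + (m + 1)) := rpow_mul_Gamma_le_Gamma_add (by linarith) (by linarith)
    _ = Gamma (x + m + 2) := by ring_nf

theorem Gamma_add_one_mul_Gamma_one_sub_mul_sin {s : ℝ} (hs : sin (π * s) ≠ 0) :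
    Gamma (s + 1) * Gamma (1 - s) * sin (π * s) = s * π := by
  rcases eq_or_ne s 0 with rfl | hs0
  · simp
  rw [Gamma_add_one hs0, mul_assoc, mul_assoc, ← mul_assoc (Gamma s), Gamma_mul_Gamma_one_sub,
    div_mul_cancel₀ _ hs]

end Real

theorem genBinom_succ_eq_Gamma {m : ℝ} (hm : m < 1) (k : ℕ) :
    genBinom m (k + 1) = (-1) ^ k * m * Gamma (k - m + 1) / (Gamma (1 - m) * (k + 1)!) := by
  have hpos : ∀ i : ℕ, 1 - m ≠ -i := fun i h => by
    have : (0 : ℝ) ≤ i := i.cast_nonneg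
    linarith
  have hprod : ∏ i ∈ range k, (m - (i + 1 : ℕ)) = (-1) ^ k * ∏ i ∈ range k, (1 - m + i) := by
    calc _ = ∏ i ∈ range k, -(1 - m + i) := prod_congr rfl fun i _ => by push_cast; ring
      _ = _ := by rw [prod_neg, card_range]
  have hG : Gamma (1 - m) ≠ 0 := (Gamma_pos_of_pos (by linarith)).ne'
  rw [genBinom, prod_range_succ', hprod, show (k : ℝ) - m + 1 = 1 - m + k by ring,
    Gamma_add_nat_eq_prod_mul hpos, cast_zero, sub_zero]
  field_simp

theorem abs_genBinom_succ_eq_Gamma {m : ℝ} (hm0 : 0 ≤ m) (hm1 : m < 1) (k : ℕ) :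
    |genBinom m (k + 1)| = m * Gamma (k - m + 1) / (Gamma (1 - m) * (k + 1)!) := by
  have hk : 0 < (k : ℝ) - m + 1 := by linarith [k.cast_nonneg (α := ℝ)]
  rw [genBinom_succ_eq_Gamma hm1, abs_div, abs_mul, abs_mul, abs_pow, abs_neg, abs_one, one_pow,
    one_mul, abs_of_nonneg hm0, abs_of_pos (Gamma_pos_of_pos hk), abs_of_pos]
  exact mul_pos (Gamma_pos_of_pos (by linarith)) (by positivity)

theorem abs_sin_pi_mul_nat_sub (n : ℕ) (x : ℝ) : |sin (π * (n - x))| = |sin (π * x)| := by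
  rw [mul_sub, mul_comm π, sin_nat_mul_pi_sub, abs_neg, abs_mul, abs_pow, abs_neg, abs_one,
    one_pow, one_mul]

theorem genBinom_abs_lt (m : ℝ) (hm : m ∈ Set.Ioo (0 : ℝ) 1) (k : ℕ) (hk : 2 ≤ k) :
    |genBinom m k| <
      Real.Gamma (m + 1) * |Real.sin (Real.pi * ((k : ℝ) - m - 1))| /
        (Real.pi * ((k : ℝ) - m - 1) ^ (m + 1)) := by
  obtain ⟨hm0, hm1⟩ := hm
  obtain ⟨n, rfl⟩ : ∃ n, k = n + 1 + 1 := ⟨k - 2, by omega⟩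
  have hsin : 0 < sin (π * m) := sin_pos_of_pos_of_lt_pi (by positivity) (by nlinarith [pi_pos])
  rw [show ((n + 1 + 1 : ℕ) : ℝ) - m - 1 = (n + 1 : ℕ) - m by push_cast; ring,
    abs_sin_pi_mul_nat_sub, abs_of_pos hsin, abs_genBinom_succ_eq_Gamma hm0.le hm1]
  set x : ℝ := (n + 1 : ℕ) - m
  have hx : 0 < x := by simp only [x]; push_cast; linarith
  have hGamma : x ^ (m + 1) * Gamma (x + 1) < (n + 1 + 1)! := by
    have := rpow_mul_Gamma_add_one_lt_Gamma_add hx hm0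
    rwa [show x + m + 2 = (n + 1 + 1 : ℕ) + 1 by simp only [x]; push_cast; ring,
      Gamma_nat_eq_factorial] at this
  have hrefl := Gamma_add_one_mul_Gamma_one_sub_mul_sin hsin.ne'
  rw [div_lt_div_iff₀ (by positivity) (by positivity)]
  calc m * Gamma (x + 1) * (π * x ^ (m + 1)) = m * π * (x ^ (m + 1) * Gamma (x + 1)) := by ring
    _ < m * π * (n + 1 + 1)! := by gcongr
    _ = Gamma (m + 1) * sin (π * m) * (Gamma (1 - m) * (n + 1 + 1)!) := by rw [← hrefl]; ring
end

section
/- Fix integers n ≥ 1, ℓ ≥ 2 and N ≥ 2(n+ℓ+2), m ∈ (0,1), α ∈ [0,1] and 0 ≤ j ≤ n. Then E_{ν_α}[c^{m,j}] = α^n·Σ_{k=0}^{ℓ} (−1)^k·binom(m,k)·(1−α)^k. -/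
/-- Occupation value of a site, regarded as a real number. -/
def occ (b : Bool) : ℝ := if b then 1 else 0

/-- Projection to the discrete torus `T_N = ZMod N` of the integer interval `⟦a,b⟧`. -/
noncomputable def torusBox (N : ℕ) (a b : ℤ) : Finset (ZMod N) :=
  (Finset.Icc a b).image (fun i : ℤ => (i : ZMod N))

/-- The set of sites `⟦-j, -j+L+1⟧ \ {0,1}` in the torus (`L` sites). -/
noncomputable def sites (N : ℕ) (j L : ℕ) : Finset (ZMod N) :=
  torusBox N (-(j : ℤ)) (-(j : ℤ) + L + 1) \ {0, 1}

/-- `𝔫_j^L(η)`: the number of particles of `η` in `⟦-j, -j+L+1⟧ \ {0,1}`. -/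
noncomputable def nnum (N : ℕ) (j L : ℕ) (η : ZMod N → Bool) : ℕ :=
  ((sites N j L).filter (fun i => η i = true)).card

/-- Bernoulli product weight `ν_α({η})`. -/
noncomputable def bwt (N : ℕ) [NeZero N] (α : ℝ) (η : ZMod N → Bool) : ℝ :=
  ∏ x : ZMod N, (if η x then α else 1 - α)

/-- PMM(n) constraint component `p_n^j(η) = ∏_{i ∈ ⟦-j,-j+n+1⟧∖{0,1}} η(i)`. -/
noncomputable def pj (N n j : ℕ) (η : ZMod N → Bool) : ℝ :=
  ∏ i ∈ sites N j n, occ (η i)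

/-- Auxiliary constraint component
`p_{n,k}^j(η) = (binom(𝔫_j^{n+k}(η),n)/binom(n+k,n))·𝟙{𝔫_j^{n+k}(η) ≥ n+1}`. -/
noncomputable def pkj (N n k j : ℕ) (η : ZMod N → Bool) : ℝ :=
  ((nnum N j (n + k) η).choose n : ℝ) / ((n + k).choose n : ℝ) *
    (if n + 1 ≤ nnum N j (n + k) η then 1 else 0)

/-- Component `c^{m,j}` of the interpolating constraint. -/
noncomputable def cmj (N n ℓ : ℕ) (m : ℝ) (j : ℕ) (η : ZMod N → Bool) : ℝ :=
  pj N n j η + ∑ k ∈ Finset.Icc 1 ℓ, (-1 : ℝ) ^ k * genBinom m k * (pj N n j η - pkj N n k j η)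

/-! Under `ν_α` the occupation variables are independent, so a cylinder event
`{η = 1 on T, η = 0 on U}` has probability `α ^ |T| * (1 - α) ^ |U|`. Counting the `n`-subsets
of the occupied sites, `binom(𝔫, n)` is a sum of products `∏_{T} η`, and `𝟙{𝔫 = n}` is a sum of
cylinder indicators with `|T| = n`, `|U| = k`. Since
`p_{n,k} = (binom(𝔫, n) - 𝟙{𝔫 = n}) / binom(n+k, n)`, this gives
`E[p_{n,k}] = α ^ n * (1 - (1 - α) ^ k)` next to `E[p_n] = α ^ n`, and the formula follows by
linearity. -/

open Finset

section Bernoulli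

variable {ι : Type*}

lemma prod_occ_eq_ite (T : Finset ι) (η : ι → Bool) :
    ∏ x ∈ T, occ (η x) = if ∀ x ∈ T, η x = true then 1 else 0 := by
  simp only [occ, prod_ite_zero, prod_const_one]

lemma sum_powersetCard_prod_occ (S : Finset ι) (n : ℕ) (η : ι → Bool) :
    ∑ T ∈ S.powersetCard n, ∏ x ∈ T, occ (η x) = ((#{x ∈ S | η x = true}).choose n : ℝ) := by
  rw [← sum_subset (powersetCard_mono (filter_subset (fun x => η x = true) S)), sum_congr rfl,
    sum_const, card_powersetCard, nsmul_one]
  · intro T hT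
    rw [prod_occ_eq_ite, if_pos fun x hx => (mem_filter.mp ((mem_powersetCard.mp hT).1 hx)).2]
  · intro T hTS hTF
    rw [prod_occ_eq_ite, if_neg]
    intro hη
    exact hTF (mem_powersetCard.mpr ⟨fun x hx => mem_filter.mpr
      ⟨(mem_powersetCard.mp hTS).1 hx, hη x hx⟩, (mem_powersetCard.mp hTS).2⟩)

variable [DecidableEq ι]

lemma sum_prod_occ_mul_bernoulli [Fintype ι] (α : ℝ) {T U : Finset ι} (hTU : Disjoint T U) :
    ∑ η : ι → Bool, (∏ x ∈ T, occ (η x)) * (∏ x ∈ U, occ (!η x)) *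
        ∏ x, (if η x then α else 1 - α)
      = α ^ #T * (1 - α) ^ #U := by
  let g : ι → Bool → ℝ := fun x b =>
    (if x ∈ T then occ b else 1) * (if x ∈ U then occ (!b) else 1) * (if b then α else 1 - α)
  have hg : ∀ x, ∑ b, g x b = (if x ∈ T then α else 1) * (if x ∈ U then 1 - α else 1) := by
    intro x
    by_cases hT : x ∈ T
    · simp [g, hT, disjoint_left.mp hTU hT, occ]
    · by_cases hU : x ∈ U <;> simp [g, hT, hU, occ]
  calc _ = ∑ η : ι → Bool, ∏ x, g x (η x) := by
        refine sum_congr rfl fun η _ => ?_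
        simp only [g, prod_mul_distrib, prod_ite_mem, univ_inter]
    _ = α ^ #T * (1 - α) ^ #U := by
        rw [← Fintype.prod_sum, prod_congr rfl fun x _ => hg x, prod_mul_distrib,
          prod_ite_mem, prod_ite_mem, univ_inter, univ_inter, prod_const, prod_const]

lemma prod_occ_mul_prod_occ_not_eq_ite {S T : Finset ι} (hTS : T ⊆ S) (η : ι → Bool) :
    (∏ x ∈ T, occ (η x)) * ∏ x ∈ S \ T, occ (!η x)
      = if {x ∈ S | η x = true} = T then 1 else 0 := by
  rw [prod_occ_eq_ite, prod_occ_eq_ite, ite_zero_mul_ite_zero, one_mul]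
  congr 1
  apply propext
  constructor
  · rintro ⟨hT, hST⟩
    ext x
    by_cases hx : x ∈ T
    · simp [hTS hx, hT x hx, hx]
    · by_cases hxS : x ∈ S
      · simpa [hx, hxS] using hST x (mem_sdiff.mpr ⟨hxS, hx⟩)
      · simp [hx, hxS]
  · rintro rfl
    simp +contextual

lemma sum_powersetCard_prod_occ_mul_prod_occ_not (S : Finset ι) (n : ℕ) (η : ι → Bool) :
    ∑ T ∈ S.powersetCard n, (∏ x ∈ T, occ (η x)) * ∏ x ∈ S \ T, occ (!η x)
      = if #{x ∈ S | η x = true} = n then 1 else 0 := by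
  rw [sum_congr rfl fun T hT =>
      prod_occ_mul_prod_occ_not_eq_ite (mem_powersetCard.mp hT).1 η, sum_ite_eq]
  simp [mem_powersetCard, filter_subset]

end Bernoulli

section Moments

variable {ι : Type*} [Fintype ι] [DecidableEq ι] (α : ℝ)

lemma sum_prod_occ_mul_bernoulli_eq_pow (T : Finset ι) :
    ∑ η : ι → Bool, (∏ x ∈ T, occ (η x)) * ∏ x, (if η x then α else 1 - α) = α ^ #T := by
  simpa using sum_prod_occ_mul_bernoulli α (disjoint_empty_right T)

lemma sum_choose_card_filter_mul_bernoulli (S : Finset ι) (n : ℕ) :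
    ∑ η : ι → Bool, ((#{x ∈ S | η x = true}).choose n : ℝ) * ∏ x, (if η x then α else 1 - α)
      = (#S).choose n * α ^ n := by
  simp_rw [← sum_powersetCard_prod_occ, sum_mul]
  rw [sum_comm, sum_congr rfl fun T hT => by
    rw [sum_prod_occ_mul_bernoulli_eq_pow, (mem_powersetCard.mp hT).2]]
  simp

lemma sum_card_filter_eq_mul_bernoulli (S : Finset ι) (n : ℕ) :
    ∑ η : ι → Bool, (if #{x ∈ S | η x = true} = n then 1 else 0) *
        ∏ x, (if η x then α else 1 - α)
      = (#S).choose n * (α ^ n * (1 - α) ^ (#S - n)) := by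
  simp_rw [← sum_powersetCard_prod_occ_mul_prod_occ_not, sum_mul]
  rw [sum_comm, sum_congr rfl fun T hT => by
    rw [sum_prod_occ_mul_bernoulli α disjoint_sdiff,
      card_sdiff_of_subset (mem_powersetCard.mp hT).1, (mem_powersetCard.mp hT).2]]
  simp

end Moments

lemma injOn_intCast_Icc {N : ℕ} {a b : ℤ} (hN : b - a < N) :
    Set.InjOn (fun i : ℤ => (i : ZMod N)) (Icc a b) := by
  intro x hx y hy hxy
  simp only [coe_Icc, Set.mem_Icc] at hx hy
  have hdvd : (N : ℤ) ∣ y - x := ((ZMod.intCast_eq_intCast_iff x y N).mp hxy).dvd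
  have : y - x = 0 := Int.eq_zero_of_abs_lt_dvd hdvd (abs_lt.mpr ⟨by omega, by omega⟩)
  omega

lemma card_torusBox {N : ℕ} {a b : ℤ} (hN : b - a < N) :
    #(torusBox N a b) = (b + 1 - a).toNat := by
  rw [torusBox, card_image_of_injOn (injOn_intCast_Icc hN), Int.card_Icc]

lemma card_sites {N j L : ℕ} (hjL : j ≤ L) (hLN : L + 2 ≤ N) : #(sites N j L) = L := by
  have h01 : ({0, 1} : Finset (ZMod N)) ⊆ torusBox N (-j) (-j + L + 1) := by
    intro x hx
    rcases mem_insert.mp hx with rfl | hx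
    · exact mem_image.mpr ⟨0, mem_Icc.mpr ⟨by omega, by omega⟩, Int.cast_zero⟩
    · exact mem_image.mpr ⟨1, mem_Icc.mpr ⟨by omega, by omega⟩, by simp [mem_singleton.mp hx]⟩
  have hcard01 : #({0, 1} : Finset (ZMod N)) = 2 := by
    have : Fact (1 < N) := ⟨by omega⟩
    simp
  rw [sites, card_sdiff_of_subset h01, card_torusBox (by omega), hcard01]
  omega

lemma genBinom_zero (m : ℝ) : genBinom m 0 = 1 := by
  simp [genBinom]

lemma pkj_eq_choose_sub_ite (N n k j : ℕ) (η : ZMod N → Bool) :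
    pkj N n k j η =
      (((nnum N j (n + k) η).choose n : ℝ) - if nnum N j (n + k) η = n then 1 else 0)
        / (n + k).choose n := by
  rw [pkj]
  rcases lt_trichotomy (nnum N j (n + k) η) n with h | h | h
  · simp [Nat.choose_eq_zero_of_lt h, h.ne]
  · simp [h]
  · simp [h.ne', Nat.succ_le_of_lt h]

section Torus

variable {N : ℕ} [NeZero N] (α : ℝ)

lemma sum_pj_mul_bwt {n j : ℕ} (hj : j ≤ n) (hN : n + 2 ≤ N) :
    ∑ η, pj N n j η * bwt N α η = α ^ n :=
  (sum_prod_occ_mul_bernoulli_eq_pow α (sites N j n)).trans (by rw [card_sites hj hN])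

lemma sum_pkj_mul_bwt {n k j : ℕ} (hj : j ≤ n + k) (hN : n + k + 2 ≤ N) :
    ∑ η, pkj N n k j η * bwt N α η = α ^ n * (1 - (1 - α) ^ k) := by
  have hmoment : ∑ η, ((nnum N j (n + k) η).choose n : ℝ) * bwt N α η
      = (n + k).choose n * α ^ n :=
    (sum_choose_card_filter_mul_bernoulli α _ n).trans (by rw [card_sites hj hN])
  have hexact : ∑ η, (if nnum N j (n + k) η = n then 1 else 0) * bwt N α η
      = (n + k).choose n * (α ^ n * (1 - α) ^ k) :=
    (sum_card_filter_eq_mul_bernoulli α _ n).trans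
      (by rw [card_sites hj hN, Nat.add_sub_cancel_left])
  have hC : ((n + k).choose n : ℝ) ≠ 0 := by
    exact_mod_cast (Nat.choose_pos (Nat.le_add_right n k)).ne'
  simp_rw [pkj_eq_choose_sub_ite, div_mul_eq_mul_div, ← sum_div, sub_mul, sum_sub_distrib,
    hmoment, hexact]
  field_simp

end Torus

theorem cmj_expectation_general (N n ℓ : ℕ) [NeZero N]
    (hN : 2 * (n + ℓ + 2) ≤ N)
    (m : ℝ) (α : ℝ)
    (j : ℕ) (hj : j ≤ n) :
    ∑ η : ZMod N → Bool, cmj N n ℓ m j η * bwt N α η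
      = α ^ n * ∑ k ∈ Finset.range (ℓ + 1), (-1 : ℝ) ^ k * genBinom m k * (1 - α) ^ k := by
  have hp := sum_pj_mul_bwt α hj (by omega : n + 2 ≤ N)
  have hpk : ∀ k ∈ Icc 1 ℓ, ∑ η, pkj N n k j η * bwt N α η = α ^ n * (1 - (1 - α) ^ k) :=
    fun k hk => have := mem_Icc.mp hk; sum_pkj_mul_bwt α (by omega) (by omega)
  calc ∑ η, cmj N n ℓ m j η * bwt N α η
      = α ^ n + ∑ k ∈ Icc 1 ℓ, (-1) ^ k * genBinom m k *
          (α ^ n - α ^ n * (1 - (1 - α) ^ k)) := by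
        simp_rw [cmj, add_mul, sum_add_distrib, sum_mul]
        rw [sum_comm, hp]
        refine congrArg _ (sum_congr rfl fun k hk => ?_)
        rw [← hpk k hk, ← hp, ← sum_sub_distrib, mul_sum]
        exact sum_congr rfl fun η _ => by ring
    _ = α ^ n * ∑ k ∈ range (ℓ + 1), (-1) ^ k * genBinom m k * (1 - α) ^ k := by
        rw [sum_range_eq_add_Ico _ (by omega : 0 < ℓ + 1), Ico_add_one_right_eq_Icc,
          genBinom_zero, mul_add, mul_sum]
        refine congrArg₂ _ (by ring) (sum_congr rfl fun k _ => by ring)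

theorem cmj_expectation (N n ℓ : ℕ) [NeZero N]
    (hn : 1 ≤ n) (hℓ : 2 ≤ ℓ) (hN : 2 * (n + ℓ + 2) ≤ N)
    (m : ℝ) (hm : m ∈ Set.Ioo (0 : ℝ) 1) (α : ℝ) (hα : α ∈ Set.Icc (0 : ℝ) 1)
    (j : ℕ) (hj : j ≤ n) :
    ∑ η : ZMod N → Bool, cmj N n ℓ m j η * bwt N α η
      = α ^ n * ∑ k ∈ Finset.range (ℓ + 1), (-1 : ℝ) ^ k * genBinom m k * (1 - α) ^ k :=
  cmj_expectation_general N n ℓ hN m α j hj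
end

section
/- Fix integers n ≥ 1, ℓ ≥ 2 and N ≥ 2(n+ℓ+2), and m ∈ (0,1). Set δ_ℓ = 1 − Σ_{k=1}^{ℓ} |binom(m,k)|. Then δ_ℓ > 0, and for every η ∈ Ω_N the interpolating constraint satisfies the decomposition c^m(η) = δ_ℓ·p_n(η) + m·p_{n,1}(η) + Σ_{k=2}^{ℓ} |binom(m,k)|·p_{n,k}(η); consequently 0 ≤ c^m(η) ≤ 1 for every η ∈ Ω_N. -/
/-- The normalized PMM(n) constraint `p_n = (1/(n+1))·Σ_{j=0}^{n} p_n^j`. -/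
noncomputable def pn (N n : ℕ) (η : ZMod N → Bool) : ℝ :=
  (1 / ((n : ℝ) + 1)) * ∑ j ∈ Finset.range (n + 1), pj N n j η

/-- The normalized auxiliary constraint `p_{n,k} = (1/(n+k+1))·Σ_{j=0}^{n+k} p_{n,k}^j`. -/
noncomputable def pnk (N n k : ℕ) (η : ZMod N → Bool) : ℝ :=
  (1 / ((n : ℝ) + k + 1)) * ∑ j ∈ Finset.range (n + k + 1), pkj N n k j η

/-- The interpolating constraint `c^m`. -/
noncomputable def cm (N n ℓ : ℕ) (m : ℝ) (η : ZMod N → Bool) : ℝ :=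
  pn N n η + ∑ k ∈ Finset.Icc 1 ℓ, (-1 : ℝ) ^ k * genBinom m k * (pn N n η - pnk N n k η)

/-! For `0 < m < 1` every `binom(m,k)` with `k ≥ 1` has sign `(-1)^(k+1)`, so
`(-1)^k binom(m,k) = -|binom(m,k)|` and `c^m` regroups as
`δ_ℓ p_n + Σ_{k=1}^ℓ |binom(m,k)| p_{n,k}`, with `binom(m,1) = m`.
The ratio `binom(m,k+1)/binom(m,k) = (m-k)/(k+1)` makes the sum defining `δ_ℓ` telescope to
`m δ_ℓ = |binom(m,ℓ)| (ℓ - m) > 0`. Since the weights `δ_ℓ` and `|binom(m,k)|` add up to `1`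
and `p_n`, `p_{n,k}` are averages of `[0,1]`-valued functions, `c^m` is a convex combination of
numbers in `[0,1]`. The only geometric input is that `⟦-j,-j+n+k+1⟧ ∖ {0,1}` has at most `n+k`
sites, which bounds `𝔫_j^{n+k}` and hence `p_{n,k}^j ≤ 1`. -/

open Finset

section genBinom

lemma genBinom_succ (m : ℝ) (k : ℕ) :
    genBinom m (k + 1) = genBinom m k * ((m - k) / (k + 1)) := by
  rw [genBinom, genBinom, prod_range_succ, Nat.factorial_succ]
  push_cast
  rw [div_mul_div_comm]
  ring

lemma genBinom_one (m : ℝ) : genBinom m 1 = m := by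
  simp [genBinom]

variable {m : ℝ}

lemma neg_one_pow_succ_mul_genBinom_pos (hm : m ∈ Set.Ioo (0 : ℝ) 1) {k : ℕ} (hk : 1 ≤ k) :
    0 < (-1 : ℝ) ^ (k + 1) * genBinom m k := by
  induction k, hk using Nat.le_induction with
  | base => simpa [genBinom_one] using hm.1
  | succ k hk ih =>
    have hmk : m < k := hm.2.trans_le (by exact_mod_cast hk)
    have hratio : 0 < (k - m) / (k + 1 : ℝ) := by
      apply div_pos <;> [linarith; positivity]
    calc (0 : ℝ) < (-1) ^ (k + 1) * genBinom m k * ((k - m) / (k + 1)) := mul_pos ih hratio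
      _ = (-1) ^ (k + 1 + 1) * genBinom m (k + 1) := by rw [genBinom_succ]; ring

lemma abs_genBinom_eq (hm : m ∈ Set.Ioo (0 : ℝ) 1) {k : ℕ} (hk : 1 ≤ k) :
    |genBinom m k| = (-1 : ℝ) ^ (k + 1) * genBinom m k := by
  rw [← abs_of_pos (neg_one_pow_succ_mul_genBinom_pos hm hk), abs_mul, abs_pow, abs_neg,
    abs_one, one_pow, one_mul]

lemma neg_one_pow_mul_genBinom (hm : m ∈ Set.Ioo (0 : ℝ) 1) {k : ℕ} (hk : 1 ≤ k) :
    (-1 : ℝ) ^ k * genBinom m k = -|genBinom m k| := by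
  rw [abs_genBinom_eq hm hk, pow_succ]
  ring

lemma abs_genBinom_succ (hm : m ∈ Set.Ioo (0 : ℝ) 1) {k : ℕ} (hk : 1 ≤ k) :
    |genBinom m (k + 1)| = |genBinom m k| * ((k - m) / (k + 1)) := by
  rw [abs_genBinom_eq hm hk, abs_genBinom_eq hm (by omega), genBinom_succ]
  ring

lemma mul_one_sub_sum_abs_genBinom (hm : m ∈ Set.Ioo (0 : ℝ) 1) {ℓ : ℕ} (hℓ : 1 ≤ ℓ) :
    m * (1 - ∑ k ∈ Icc 1 ℓ, |genBinom m k|) = |genBinom m ℓ| * (ℓ - m) := by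
  induction ℓ, hℓ using Nat.le_induction with
  | base => simp [genBinom_one, abs_of_pos hm.1]
  | succ ℓ hℓ ih =>
    rw [sum_Icc_succ_top (by omega), abs_genBinom_succ hm hℓ]
    push_cast
    field_simp
    linear_combination (ℓ + 1 : ℝ) * ih

lemma one_sub_sum_abs_genBinom_pos (hm : m ∈ Set.Ioo (0 : ℝ) 1) (ℓ : ℕ) :
    0 < 1 - ∑ k ∈ Icc 1 ℓ, |genBinom m k| := by
  rcases Nat.eq_zero_or_pos ℓ with rfl | hℓ
  · simp
  have hb : 0 < |genBinom m ℓ| := by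
    rw [abs_genBinom_eq hm hℓ]
    exact neg_one_pow_succ_mul_genBinom_pos hm hℓ
  have hℓm : 0 < (ℓ : ℝ) - m := by
    have : (1 : ℝ) ≤ ℓ := by exact_mod_cast hℓ
    linarith [hm.2]
  refine pos_of_mul_pos_right ?_ hm.1.le
  rw [mul_one_sub_sum_abs_genBinom hm hℓ]
  exact mul_pos hb hℓm

end genBinom

section constraints

lemma card_sites_le (N : ℕ) {j L : ℕ} (hj : j ≤ L) : #(sites N j L) ≤ L := by
  classical
  set I := Icc (-(j : ℤ)) (-(j : ℤ) + L + 1)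
  have hsub : sites N j L ⊆ (I \ {0, 1}).image (fun i : ℤ => (i : ZMod N)) := by
    intro x hx
    simp only [sites, torusBox, mem_sdiff, mem_image, mem_insert, mem_singleton] at hx ⊢
    obtain ⟨⟨i, hi, rfl⟩, hx01⟩ := hx
    exact ⟨i, ⟨hi, fun h => hx01 (by rcases h with rfl | rfl <;> simp)⟩, rfl⟩
  have h01 : ({0, 1} : Finset ℤ) ⊆ I := by
    intro i hi
    simp only [mem_insert, mem_singleton] at hi
    rcases hi with rfl | rfl <;> simp only [I, mem_Icc] <;> omega
  calc #(sites N j L) ≤ #(I \ {0, 1}) := (card_le_card hsub).trans card_image_le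
    _ = L := by rw [card_sdiff_of_subset h01, Int.card_Icc, card_pair zero_ne_one]; omega

lemma average_mem_Icc {M : ℕ} {f : ℕ → ℝ} (hf : ∀ j ∈ range M, f j ∈ Set.Icc 0 1) :
    1 / (M : ℝ) * ∑ j ∈ range M, f j ∈ Set.Icc 0 1 := by
  have hsum : ∑ j ∈ range M, f j ≤ M := by
    simpa using sum_le_card_nsmul (range M) f 1 fun j hj => (hf j hj).2
  rw [one_div_mul_eq_div]
  exact ⟨div_nonneg (sum_nonneg fun j hj => (hf j hj).1) M.cast_nonneg,
    div_le_one_of_le₀ hsum M.cast_nonneg⟩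

lemma occ_mem_Icc (b : Bool) : occ b ∈ Set.Icc 0 1 := by
  cases b <;> simp [occ]

lemma pj_mem_Icc (N n j : ℕ) (η : ZMod N → Bool) : pj N n j η ∈ Set.Icc 0 1 :=
  ⟨prod_nonneg fun _ _ => (occ_mem_Icc _).1,
    prod_le_one (fun _ _ => (occ_mem_Icc _).1) fun _ _ => (occ_mem_Icc _).2⟩

lemma pkj_mem_Icc (N : ℕ) {n k j : ℕ} (hj : j ≤ n + k) (η : ZMod N → Bool) :
    pkj N n k j η ∈ Set.Icc 0 1 := by
  have hnum : nnum N j (n + k) η ≤ n + k := (card_filter_le _ _).trans (card_sites_le N hj)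
  have hden : (0 : ℝ) < (n + k).choose n := by exact_mod_cast Nat.choose_pos (n.le_add_right k)
  have hratio : ((nnum N j (n + k) η).choose n : ℝ) / (n + k).choose n ∈ Set.Icc 0 1 :=
    ⟨by positivity, div_le_one_of_le₀ (by exact_mod_cast Nat.choose_le_choose n hnum) hden.le⟩
  have hind : (if n + 1 ≤ nnum N j (n + k) η then 1 else 0 : ℝ) ∈ Set.Icc 0 1 := by
    split_ifs <;> simp
  exact ⟨mul_nonneg hratio.1 hind.1, mul_le_one₀ hratio.2 hind.1 hind.2⟩

lemma pn_mem_Icc (N n : ℕ) (η : ZMod N → Bool) : pn N n η ∈ Set.Icc 0 1 := by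
  have := average_mem_Icc (M := n + 1) fun j _ => pj_mem_Icc N n j η
  simpa [pn] using this

lemma pnk_mem_Icc (N n k : ℕ) (η : ZMod N → Bool) : pnk N n k η ∈ Set.Icc 0 1 := by
  have := average_mem_Icc (M := n + k + 1) fun j hj =>
    pkj_mem_Icc N (Nat.lt_succ_iff.1 (mem_range.1 hj)) η
  simpa [pnk] using this

end constraints

section cm

variable {N n ℓ : ℕ} {m : ℝ}

lemma cm_eq_sum_abs_genBinom (hm : m ∈ Set.Ioo (0 : ℝ) 1) (η : ZMod N → Bool) :
    cm N n ℓ m η = (1 - ∑ k ∈ Icc 1 ℓ, |genBinom m k|) * pn N n η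
      + ∑ k ∈ Icc 1 ℓ, |genBinom m k| * pnk N n k η := by
  have hterm : ∀ k ∈ Icc 1 ℓ, (-1 : ℝ) ^ k * genBinom m k * (pn N n η - pnk N n k η)
      = |genBinom m k| * pnk N n k η - |genBinom m k| * pn N n η := by
    intro k hk
    rw [neg_one_pow_mul_genBinom hm (mem_Icc.1 hk).1]
    ring
  rw [cm, sum_congr rfl hterm, sum_sub_distrib, ← sum_mul]
  ring

lemma cm_mem_Icc (hm : m ∈ Set.Ioo (0 : ℝ) 1) (η : ZMod N → Bool) :
    cm N n ℓ m η ∈ Set.Icc 0 1 := by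
  have hδ := one_sub_sum_abs_genBinom_pos hm ℓ
  have hpn := pn_mem_Icc N n η
  have hpnk : ∀ k ∈ Icc 1 ℓ, |genBinom m k| * pnk N n k η ∈ Set.Icc 0 |genBinom m k| :=
    fun k _ => ⟨mul_nonneg (abs_nonneg _) (pnk_mem_Icc N n k η).1,
      mul_le_of_le_one_right (abs_nonneg _) (pnk_mem_Icc N n k η).2⟩
  rw [cm_eq_sum_abs_genBinom hm]
  constructor
  · exact add_nonneg (mul_nonneg hδ.le hpn.1) (sum_nonneg fun k hk => (hpnk k hk).1)
  · have hδpn := mul_le_of_le_one_right hδ.le hpn.2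
    have := sum_le_sum fun k hk => (hpnk k hk).2
    linarith

end cm

theorem cm_decomposition_general (N n ℓ : ℕ)
    (hℓ : 2 ≤ ℓ)
    (m : ℝ) (hm : m ∈ Set.Ioo (0 : ℝ) 1) :
    0 < 1 - ∑ k ∈ Finset.Icc 1 ℓ, |genBinom m k| ∧
    ∀ η : ZMod N → Bool,
      cm N n ℓ m η
          = (1 - ∑ k ∈ Finset.Icc 1 ℓ, |genBinom m k|) * pn N n η
            + m * pnk N n 1 η
            + ∑ k ∈ Finset.Icc 2 ℓ, |genBinom m k| * pnk N n k η
        ∧ 0 ≤ cm N n ℓ m η ∧ cm N n ℓ m η ≤ 1 := by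
  refine ⟨one_sub_sum_abs_genBinom_pos hm ℓ, fun η => ⟨?_, cm_mem_Icc hm η⟩⟩
  have hsplit : ∑ k ∈ Icc 1 ℓ, |genBinom m k| * pnk N n k η
      = m * pnk N n 1 η + ∑ k ∈ Icc 2 ℓ, |genBinom m k| * pnk N n k η := by
    rw [← insert_Icc_add_one_left_eq_Icc (by omega : 1 ≤ ℓ), sum_insert (by simp), genBinom_one,
      abs_of_pos hm.1]
    rfl
  rw [cm_eq_sum_abs_genBinom hm, hsplit, add_assoc]

theorem cm_decomposition (N n ℓ : ℕ) [NeZero N]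
    (hn : 1 ≤ n) (hℓ : 2 ≤ ℓ) (hN : 2 * (n + ℓ + 2) ≤ N)
    (m : ℝ) (hm : m ∈ Set.Ioo (0 : ℝ) 1) :
    0 < 1 - ∑ k ∈ Finset.Icc 1 ℓ, |genBinom m k| ∧
    ∀ η : ZMod N → Bool,
      cm N n ℓ m η
          = (1 - ∑ k ∈ Finset.Icc 1 ℓ, |genBinom m k|) * pn N n η
            + m * pnk N n 1 η
            + ∑ k ∈ Finset.Icc 2 ℓ, |genBinom m k| * pnk N n k η
        ∧ 0 ≤ cm N n ℓ m η ∧ cm N n ℓ m η ≤ 1 :=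
  cm_decomposition_general N n ℓ hℓ m hm
end
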